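/- Let (M,g,J,F) be a closed almost Hermitian 4-manifold. If S = S^{1,0} + S^{0,1} is a smooth real 1-form whose J-anti-invariant exterior derivative T := dJ⁺S satisfies dT = 0, then dJ⁻S = 0 and hence T = dS. -/

import Mathlib

theorem stmt_15_general (Ω1 Ω2 Ω3 : Type*)
    [AddCommGroup Ω1] [Module ℝ Ω1] [AddCommGroup Ω2] [Module ℝ Ω2]
    [AddCommGroup Ω3] [Module ℝ Ω3]
    (dJp dJm : Ω1 →ₗ[ℝ] Ω2) (d2 : Ω2 →ₗ[ℝ] Ω3)
    (Jc : Ω2 →ₗ[ℝ] Ω2) (hst : Ω2 →ₗ[ℝ] Ω2)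
    (intW : Ω2 →ₗ[ℝ] Ω2 →ₗ[ℝ] ℝ) (intW13 : Ω1 →ₗ[ℝ] Ω3 →ₗ[ℝ] ℝ)
    (hJp : ∀ u, Jc (dJp u) = dJp u)
    (hJm : ∀ u, Jc (dJm u) = - dJm u)
    (hcross : ∀ α β, Jc α = α → Jc β = -β → intW α β = 0)
    (hsd : ∀ β, Jc β = -β → intW β β = intW β (hst β))
    (stokes : ∀ u ψ, intW (dJp u + dJm u) ψ = intW13 u (d2 ψ))
    (ddzero : ∀ u, d2 (dJp u + dJm u) = 0)
    (hdef : ∀ ψ, intW ψ (hst ψ) = 0 → ψ = 0)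
    (S : Ω1) (hT : d2 (dJp S) = 0) :
    dJm S = 0 ∧ dJp S = dJp S + dJm S := by
  have hclosed : d2 (dJm S) = 0 := by
    simpa only [map_add, hT, zero_add] using ddzero S
  -- Stokes gives `∫ dS ∧ dJ⁻S = ∫ S ∧ d(dJ⁻S) = 0`, and `dJ⁺S ∧ dJ⁻S = 0` pointwise.
  have hself : intW (dJm S) (dJm S) = 0 := by
    have h := stokes S (dJm S)
    rwa [hclosed, map_zero, map_add, LinearMap.add_apply,
      hcross _ _ (hJp S) (hJm S), zero_add] at h
  have hzero : dJm S = 0 := hdef _ ((hsd _ (hJm S)).symm.trans hself)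
  exact ⟨hzero, by rw [hzero, add_zero]⟩

/-- Abstract formulation of: on a closed almost Hermitian 4-manifold, if `S` is a
smooth real 1-form and `T := dJ⁺S` satisfies `dT = 0`, then `dJ⁻S = 0` and hence
`T = dS`.  The hypotheses encode `dS = dJ⁺S + dJ⁻S`, `d² = 0`, Stokes' theorem,
the vanishing of `J`-invariant ∧ `J`-anti-invariant wedges, the self-duality of
`J`-anti-invariant 2-forms (so `dJ⁻S ∧ dJ⁻S = |dJ⁻S|² dvol`), and the
definiteness of the L² pairing `intW ψ (hst ψ)`. -/
theorem stmt_15 (Ω1 Ω2 Ω3 : Type*)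
    [AddCommGroup Ω1] [Module ℝ Ω1] [AddCommGroup Ω2] [Module ℝ Ω2]
    [AddCommGroup Ω3] [Module ℝ Ω3]
    (dJp dJm : Ω1 →ₗ[ℝ] Ω2) (d2 : Ω2 →ₗ[ℝ] Ω3)
    (Jc : Ω2 →ₗ[ℝ] Ω2) (hst : Ω2 →ₗ[ℝ] Ω2)
    (intW : Ω2 →ₗ[ℝ] Ω2 →ₗ[ℝ] ℝ) (intW13 : Ω1 →ₗ[ℝ] Ω3 →ₗ[ℝ] ℝ)
    (hsymm : ∀ α β, intW α β = intW β α)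
    (hJp : ∀ u, Jc (dJp u) = dJp u)
    (hJm : ∀ u, Jc (dJm u) = - dJm u)
    (hcross : ∀ α β, Jc α = α → Jc β = -β → intW α β = 0)
    (hsd : ∀ β, Jc β = -β → intW β β = intW β (hst β))
    (stokes : ∀ u ψ, intW (dJp u + dJm u) ψ = intW13 u (d2 ψ))
    (ddzero : ∀ u, d2 (dJp u + dJm u) = 0)
    (hdef : ∀ ψ, intW ψ (hst ψ) = 0 → ψ = 0)
    (S : Ω1) (hT : d2 (dJp S) = 0) :
    dJm S = 0 ∧ dJp S = dJp S + dJm S :=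
  stmt_15_general Ω1 Ω2 Ω3 dJp dJm d2 Jc hst intW intW13 hJp hJm hcross hsd stokes ddzero hdef S hT
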